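/- arXiv:2010.04008 — 3 statements merged into one kernel-verified Lean document; each statement's English description precedes it below -/
import Mathlib

section
/- Let n ≥ 1, let A ∈ 𝒮_n (all complex eigenvalues of A lie in the open unit disk and, in particular, are nonzero), and let k ∈ ℕ_{≥1}. If ν(A,A) < k+1 and (A,A) is k-nonresonant, then (A,A) is ∞-nonresonant. -/
/-!
Let `r < 1` be the largest modulus of an eigenvalue. A monomial of degree `|m| ≥ k + 1` in the
eigenvalues has modulus at most `r ^ |m| ≤ r ^ (k + 1)`, while the spread bound, read through
`log r < 0`, says that every eigenvalue has modulus strictly larger than `r ^ (k + 1)`.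
So only monomials of degree `≤ k` can hit an eigenvalue, and those are excluded by `k`-nonresonance.
-/

noncomputable section
open Matrix Polynomial

/-- `eig` lists the complex eigenvalues of the real matrix `A` with algebraic multiplicity,
i.e. the characteristic polynomial of the complexification of `A` factors as
`∏ i, (X - eig i)`. -/
def IsEigList {n : ℕ} (A : Matrix (Fin n) (Fin n) ℝ) (eig : Fin n → ℂ) : Prop :=
  (A.map Complex.ofReal).charpoly = ∏ i, (X - C (eig i))

theorem Finset.norm_prod_pow_le_pow_sum {ι R : Type*} [NormedCommRing R] [NormOneClass R]
    (s : Finset ι) (f : ι → R) (m : ι → ℕ) {r : ℝ} (hf : ∀ j ∈ s, ‖f j‖ ≤ r) :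
    ‖∏ j ∈ s, f j ^ m j‖ ≤ r ^ ∑ j ∈ s, m j := by
  rw [← Finset.prod_pow_eq_pow_sum]
  refine (Finset.norm_prod_le s _).trans (Finset.prod_le_prod (fun _ _ ↦ norm_nonneg _) ?_)
  intro j hj
  exact (norm_pow_le _ _).trans (pow_le_pow_left₀ (norm_nonneg _) (hf j hj) _)

theorem Real.pow_lt_of_log_div_log_lt {x r : ℝ} {N : ℕ} (hx : 0 < x) (hr₀ : 0 < r) (hr₁ : r < 1)
    (h : Real.log x / Real.log r < N) : r ^ N < x := by
  have hlog : Real.log r < 0 := Real.log_neg hr₀ hr₁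
  rw [div_lt_iff_of_neg hlog, ← Real.log_pow] at h
  exact (Real.log_lt_log_iff (pow_pos hr₀ N) hx).mp h

theorem infty_nonresonant_of_k_nonresonant_general
    (n : ℕ)
    (eig : Fin n → ℂ)
    (hstable : ∀ i, eig i ≠ 0 ∧ ‖eig i‖ < 1)
    (k : ℕ)
    (hspread : ∀ i j,
      Real.log (‖eig i‖) / Real.log (‖eig j‖) < (k : ℝ) + 1)
    (hres : ∀ (i : Fin n) (m : Fin n → ℕ), 2 ≤ ∑ j, m j → ∑ j, m j ≤ k →
      eig i ≠ ∏ j, eig j ^ m j) :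
    ∀ (i : Fin n) (m : Fin n → ℕ), 2 ≤ ∑ j, m j → eig i ≠ ∏ j, eig j ^ m j := by
  intro i m hm₂
  by_cases hmk : ∑ j, m j ≤ k
  · exact hres i m hm₂ hmk
  have : Nonempty (Fin n) := ⟨i⟩
  obtain ⟨j₀, hj₀⟩ := Finite.exists_max fun j ↦ ‖eig j‖
  have hr₀ : 0 < ‖eig j₀‖ := norm_pos_iff.mpr (hstable j₀).1
  have hr₁ : ‖eig j₀‖ < 1 := (hstable j₀).2
  have heig_gt : ‖eig j₀‖ ^ (k + 1) < ‖eig i‖ :=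
    Real.pow_lt_of_log_div_log_lt (norm_pos_iff.mpr (hstable i).1) hr₀ hr₁
      (by exact_mod_cast hspread i j₀)
  have hmonomial_le : ‖∏ j, eig j ^ m j‖ ≤ ‖eig j₀‖ ^ (k + 1) :=
    (Finset.norm_prod_pow_le_pow_sum _ eig m fun j _ ↦ hj₀ j).trans
      (pow_le_pow_of_le_one hr₀.le hr₁.le (by omega))
  intro heq
  rw [← heq] at hmonomial_le
  exact hmonomial_le.not_gt heig_gt

/-- If `A` has nonzero eigenvalues in the open unit disk, the spectral spread
`ν(A,A) = max_{i,j} ln|λ_i| / ln|λ_j|` is `< k + 1`, and `(A,A)` is `k`-nonresonant,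
then `(A,A)` is `∞`-nonresonant. -/
theorem infty_nonresonant_of_k_nonresonant
    (n : ℕ) (hn : 1 ≤ n) (A : Matrix (Fin n) (Fin n) ℝ)
    (eig : Fin n → ℂ) (heig : IsEigList A eig)
    (hstable : ∀ i, eig i ≠ 0 ∧ ‖eig i‖ < 1)
    (k : ℕ) (hk : 1 ≤ k)
    (hspread : ∀ i j,
      Real.log (‖eig i‖) / Real.log (‖eig j‖) < (k : ℝ) + 1)
    (hres : ∀ (i : Fin n) (m : Fin n → ℕ), 2 ≤ ∑ j, m j → ∑ j, m j ≤ k →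
      eig i ≠ ∏ j, eig j ^ m j) :
    ∀ (i : Fin n) (m : Fin n → ℕ), 2 ≤ ∑ j, m j → eig i ≠ ∏ j, eig j ^ m j :=
  infty_nonresonant_of_k_nonresonant_general n eig hstable k hspread hres
end
end

section
/- Let n ≥ 1. The set 𝒩_n ∩ 𝒮_n is open in 𝒮_n: for every A ∈ 𝒩_n with all eigenvalues in the open unit disk, there exists ε > 0 such that every real n×n matrix B with all eigenvalues in the open unit disk and ‖B − A‖ < ε belongs to 𝒩_n. -/
noncomputable section
open Matrix Polynomial

/-- `A ∈ 𝒩_n`: `A` is invertible, has `n` distinct complex eigenvalues, and `(A,A)`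
is `∞`-nonresonant (no eigenvalue equals a product `λ_1^{m_1} ⋯ λ_n^{m_n}` with
`m_1 + ⋯ + m_n ≥ 2`). -/
def MemN {n : ℕ} (A : Matrix (Fin n) (Fin n) ℝ) : Prop :=
  A.det ≠ 0 ∧ ∀ eig : Fin n → ℂ, IsEigList A eig →
    Function.Injective eig ∧
      ∀ (i : Fin n) (m : Fin n → ℕ), 2 ≤ ∑ j, m j → eig i ≠ ∏ j, eig j ^ m j

/-- `A ∈ 𝒮_n`: all complex eigenvalues of `A` lie in the open unit disk. -/
def MemS {n : ℕ} (A : Matrix (Fin n) (Fin n) ℝ) : Prop :=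
  ∀ eig : Fin n → ℂ, IsEigList A eig → ∀ i, ‖eig i‖ < 1

/-!
Since the eigenvalues `μ` of `A` are distinct, for `B` close to `A` the characteristic polynomial
of `B` is small at every `μ k`, so each of the `n` disjoint small discs around the `μ k` contains an
eigenvalue of `B`, and by counting exactly one: up to a permutation, the eigenvalue list of `B` is
close to `μ`. Nonresonance is stable under perturbation of a tuple `v` in the open unit polydisc.
It forces `v i ≠ 0` (as `0 = 0 ^ 2`), so `c < ‖w i‖ < r < 1` for `w` near `v`; with `r ^ K < c`, a
product `∏ w j ^ m j` with some `m j > K` has norm less than every `‖w i‖`, so only the finitely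
many exponents `m ≤ K` impose conditions, each of them open.
-/

open Filter Topology Function

section Nonresonance

variable {ι : Type*} [Fintype ι]

def IsNonresonant {M : Type*} [CommMonoid M] (v : ι → M) : Prop :=
  ∀ (i : ι) (m : ι → ℕ), 2 ≤ ∑ j, m j → v i ≠ ∏ j, v j ^ m j

theorem IsNonresonant.ne_zero {M : Type*} [CommMonoidWithZero M] {v : ι → M}
    (hv : IsNonresonant v) (i : ι) : v i ≠ 0 := by
  classical
  intro h
  refine hv i (Pi.single i 2) (by simp) ?_
  rw [Fintype.prod_eq_single i fun j hj => by simp [hj]]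
  simp [h]

theorem IsNonresonant.of_comp_equiv {κ M : Type*} [Fintype κ] [CommMonoid M] {v : ι → M}
    (σ : κ ≃ ι) (hv : IsNonresonant (v ∘ σ)) : IsNonresonant v := by
  intro i m hm h
  refine hv (σ.symm i) (m ∘ σ) (by rwa [comp_def, σ.sum_comp]) ?_
  simpa [σ.prod_comp fun j => v j ^ m j] using h

variable {𝕜 : Type*} [NormedField 𝕜]

theorem norm_prod_pow_le_pow_sum {v : ι → 𝕜} {r : ℝ} (hv : ∀ j, ‖v j‖ ≤ r) (m : ι → ℕ) :
    ‖∏ j, v j ^ m j‖ ≤ r ^ ∑ j, m j := by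
  calc ‖∏ j, v j ^ m j‖ = ∏ j, ‖v j‖ ^ m j := by simp only [norm_prod, norm_pow]
    _ ≤ ∏ j, r ^ m j := by gcongr with j; exact hv j
    _ = r ^ ∑ j, m j := Finset.prod_pow_eq_pow_sum _ _ _

theorem IsNonresonant.eventually_nhds {v : ι → 𝕜} (hv : IsNonresonant v)
    (hv1 : ∀ i, ‖v i‖ < 1) : ∀ᶠ w in 𝓝 v, IsNonresonant w := by
  classical
  obtain ⟨r, hvr, hr1⟩ : ∃ r, (∀ i, ‖v i‖ < r) ∧ r < 1 :=
    (((eventually_all.2 fun i => eventually_gt_nhds (hv1 i)).filter_mono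
      nhdsWithin_le_nhds).and (self_mem_nhdsWithin (s := Set.Iio 1))).exists
  obtain ⟨c, hcv, hc0⟩ : ∃ c, (∀ i, c < ‖v i‖) ∧ 0 < c :=
    (((eventually_all.2 fun i => eventually_lt_nhds (norm_pos_iff.2 (hv.ne_zero i))).filter_mono
      nhdsWithin_le_nhds).and (self_mem_nhdsWithin (s := Set.Ioi 0))).exists
  obtain ⟨K, hK⟩ := exists_pow_lt_of_lt_one hc0 hr1
  have hbounds : ∀ᶠ w in 𝓝 v, ∀ i, c < ‖w i‖ ∧ ‖w i‖ < r := eventually_all.2 fun i =>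
    (continuous_apply i : Continuous fun w : ι → 𝕜 => w i).norm.continuousAt.eventually
      (Ioo_mem_nhds (hcv i) (hvr i))
  have hlow : ∀ᶠ w in 𝓝 v, ∀ i, ∀ m ∈ Set.Iic (fun _ => K),
      2 ≤ ∑ j, m j → w i ≠ ∏ j, w j ^ m j :=
    eventually_all.2 fun i => (Set.finite_Iic _).eventually_all.2 fun m _ =>
      eventually_imp_distrib_left.2 fun hm =>
        (isOpen_ne_fun (continuous_apply i) (by fun_prop)).mem_nhds (hv i m hm)
  filter_upwards [hbounds, hlow] with w hw hwK i m hm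
  by_cases hmK : m ≤ fun _ => K
  · exact hwK i m hmK hm
  obtain ⟨j, hj⟩ : ∃ j, K < m j := by simpa [Pi.le_def] using hmK
  have hr0 : 0 ≤ r := (norm_nonneg _).trans (hw i).2.le
  intro heq
  have hsmall : ‖∏ j, w j ^ m j‖ < ‖w i‖ :=
    calc ‖∏ j, w j ^ m j‖ ≤ r ^ ∑ j, m j := norm_prod_pow_le_pow_sum (fun j => (hw j).2.le) m
      _ ≤ r ^ K := pow_le_pow_of_le_one hr0 hr1.le
          (hj.le.trans (Finset.single_le_sum (fun _ _ => Nat.zero_le _) (Finset.mem_univ j)))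
      _ < c := hK
      _ < ‖w i‖ := (hw i).1
  exact hsmall.ne (congrArg norm heq).symm

end Nonresonance

theorem eventually_nhds_injective {ι X : Type*} [Finite ι] [TopologicalSpace X] [T2Space X]
    {v : ι → X} (hv : Injective v) : ∀ᶠ w in 𝓝 v, Injective w := by
  have hne : ∀ᶠ w in 𝓝 v, ∀ i j, i ≠ j → w i ≠ w j :=
    eventually_all.2 fun i => eventually_all.2 fun j => eventually_imp_distrib_left.2 fun hij =>
      (isOpen_ne_fun (continuous_apply i) (continuous_apply j)).mem_nhds (hv.ne hij)
  exact hne.mono fun w hw i j h => by_contra fun hij => hw i j hij h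

theorem exists_perm_dist_lt_of_norm_prod_sub_lt {ι 𝕜 : Type*} [Fintype ι] [NormedField 𝕜]
    {μ e : ι → 𝕜} {δ : ℝ} (hδ : 0 ≤ δ) (hsep : ∀ k k', k ≠ k' → 2 * δ < dist (μ k) (μ k'))
    (hprod : ∀ k, ‖∏ i, (μ k - e i)‖ < δ ^ Fintype.card ι) :
    ∃ σ : Equiv.Perm ι, ∀ k, dist (e (σ k)) (μ k) < δ := by
  have hnear : ∀ k, ∃ i, dist (e i) (μ k) < δ := fun k => by
    by_contra! hfar
    refine (hprod k).not_ge ?_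
    calc δ ^ Fintype.card ι = ∏ _i : ι, δ := by simp
      _ ≤ ∏ i, ‖μ k - e i‖ :=
        Finset.prod_le_prod (fun _ _ => hδ) fun i _ => by
          rw [← dist_eq_norm, dist_comm]
          exact hfar i
      _ = ‖∏ i, (μ k - e i)‖ := (norm_prod _ _).symm
  choose τ hτ using hnear
  have hτinj : Injective τ := fun k k' h => by
    by_contra hne
    refine (hsep k k' hne).not_ge ?_
    calc dist (μ k) (μ k') ≤ dist (e (τ k)) (μ k) + dist (e (τ k)) (μ k') :=
          dist_triangle_left _ _ _
      _ ≤ 2 * δ := by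
        have hk' := hτ k'
        rw [← h] at hk'
        linarith [hτ k]
  exact ⟨Equiv.ofBijective τ (Finite.injective_iff_bijective.1 hτinj), hτ⟩

theorem Matrix.continuous_eval_charpoly {n R : Type*} [Fintype n] [DecidableEq n] [CommRing R]
    [TopologicalSpace R] [IsTopologicalRing R] (z : R) :
    Continuous fun M : Matrix n n R => M.charpoly.eval z := by
  simp_rw [Matrix.eval_charpoly]
  exact (continuous_const.sub continuous_id).matrix_det

theorem Matrix.exists_pos_forall_abs_sub_lt_of_eventually {m n : Type*} [Fintype m] [Fintype n]
    {A : Matrix m n ℝ} {P : Matrix m n ℝ → Prop} (h : ∀ᶠ B in 𝓝 A, P B) :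
    ∃ ε > 0, ∀ B, (∀ i j, |B i j - A i j| < ε) → P B := by
  let := Matrix.normedAddCommGroup (m := m) (n := n) (α := ℝ)
  obtain ⟨ε, hε, hP⟩ := Metric.eventually_nhds_iff.1 h
  refine ⟨ε, hε, fun B hB => hP ?_⟩
  exact (dist_pi_lt_iff hε).2 fun i => (dist_pi_lt_iff hε).2 fun j => hB i j

theorem exists_isEigList {n : ℕ} (M : Matrix (Fin n) (Fin n) ℝ) : ∃ e, IsEigList M e := by
  set p := (M.map Complex.ofReal).charpoly
  have hsplit : p.Splits := IsAlgClosed.splits p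
  have hcard : Fintype.card p.roots = n := by
    rw [Multiset.card_coe, ← hsplit.natDegree_eq_card_roots, charpoly_natDegree_eq_dim,
      Fintype.card_fin]
  let σ := Fintype.equivFinOfCardEq hcard
  refine ⟨fun i => σ.symm i, ?_⟩
  calc p = (p.roots.map fun a => X - C a).prod := hsplit.eq_prod_roots_of_monic (charpoly_monic _)
    _ = ∏ x : p.roots, (X - C (x : ℂ)) := by
      rw [Finset.prod_eq_multiset_prod]
      exact congrArg Multiset.prod (Multiset.map_univ _ _).symm
    _ = ∏ i, (X - C (σ.symm i : ℂ)) := (σ.symm.prod_comp fun x : p.roots => X - C (x : ℂ)).symm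

namespace IsEigList

variable {n : ℕ} {M : Matrix (Fin n) (Fin n) ℝ} {e : Fin n → ℂ}

theorem eval_charpoly (he : IsEigList M e) (z : ℂ) :
    (M.map Complex.ofReal).charpoly.eval z = ∏ i, (z - e i) := by
  rw [he, Polynomial.eval_prod]
  simp

theorem det_eq_prod (he : IsEigList M e) : (M.det : ℂ) = ∏ i, e i := by
  have hdet : (M.det : ℂ) = (M.map Complex.ofReal).det := Complex.ofRealHom.map_det M
  have hprod : ∏ i, (X - C (e i)) = ((Finset.univ.val.map e).map fun a => X - C a).prod := by
    rw [Multiset.map_map]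
    rfl
  rw [hdet, Matrix.det_eq_prod_roots_charpoly, he, hprod, Polynomial.roots_multiset_prod_X_sub_C]
  rfl

theorem eventually_exists_perm_comp_mem {A : Matrix (Fin n) (Fin n) ℝ}
    {μ : Fin n → ℂ} (hμ : IsEigList A μ) (hinj : Injective μ) {U : Set (Fin n → ℂ)}
    (hU : U ∈ 𝓝 μ) :
    ∀ᶠ B in 𝓝 A, ∀ e, IsEigList B e → ∃ σ : Equiv.Perm (Fin n), e ∘ σ ∈ U := by
  obtain ⟨ρ, hρ, hρU⟩ := Metric.mem_nhds_iff.1 hU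
  have hsmallδ : ∀ᶠ δ in 𝓝 (0 : ℝ), δ < ρ ∧ ∀ k k', k ≠ k' → 2 * δ < dist (μ k) (μ k') := by
    refine (eventually_lt_nhds hρ).and (eventually_all.2 fun k => eventually_all.2 fun k' =>
      eventually_imp_distrib_left.2 fun hkk' => ?_)
    exact ((continuous_const_mul 2).tendsto' 0 0 (mul_zero 2)).eventually_lt_const
      (dist_pos.2 (hinj.ne hkk'))
  obtain ⟨δ, ⟨hδρ, hsep⟩, hδ⟩ :=
    ((hsmallδ.filter_mono nhdsWithin_le_nhds).and (self_mem_nhdsWithin (s := Set.Ioi 0))).exists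
  have hsmallEval : ∀ k, ∀ᶠ B in 𝓝 A,
      ‖(B.map Complex.ofReal).charpoly.eval (μ k)‖ < δ ^ n := fun k => by
    have hcont : Continuous fun B : Matrix (Fin n) (Fin n) ℝ =>
        ‖(B.map Complex.ofReal).charpoly.eval (μ k)‖ :=
      ((Matrix.continuous_eval_charpoly _).comp
        (continuous_id.matrix_map Complex.continuous_ofReal)).norm
    refine (hcont.tendsto A).eventually_lt_const ?_
    simpa [hμ.eval_charpoly, Finset.prod_eq_zero (Finset.mem_univ k)] using pow_pos hδ n
  filter_upwards [eventually_all.2 hsmallEval] with B hB e he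
  obtain ⟨σ, hσ⟩ := exists_perm_dist_lt_of_norm_prod_sub_lt hδ.le hsep
    (by simpa [he.eval_charpoly] using hB)
  exact ⟨σ, hρU ((dist_pi_lt_iff hρ).2 fun k => (hσ k).trans hδρ)⟩

end IsEigList

theorem memN_of_forall_isEigList {n : ℕ} {B : Matrix (Fin n) (Fin n) ℝ}
    (h : ∀ e, IsEigList B e → Injective e ∧ IsNonresonant e) : MemN B := by
  refine ⟨fun hdet => ?_, h⟩
  obtain ⟨e, he⟩ := exists_isEigList B
  have hprod : ∏ i, e i = 0 := by rw [← he.det_eq_prod, hdet, Complex.ofReal_zero]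
  obtain ⟨i, -, hi⟩ := Finset.prod_eq_zero_iff.1 hprod
  exact (h e he).2.ne_zero i hi

theorem nonresonant_open_in_S_general (n : ℕ)
    (A : Matrix (Fin n) (Fin n) ℝ) (hA : MemN A) (hAS : MemS A) :
    ∃ ε > (0 : ℝ), ∀ B : Matrix (Fin n) (Fin n) ℝ,
      MemS B → (∀ i j, |B i j - A i j| < ε) → MemN B := by
  obtain ⟨μ, hμ⟩ := exists_isEigList A
  obtain ⟨hinj, hnr⟩ : Injective μ ∧ IsNonresonant μ := hA.2 μ hμ
  have hU : {w | Injective w ∧ IsNonresonant w} ∈ 𝓝 μ :=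
    (eventually_nhds_injective hinj).and (hnr.eventually_nhds (hAS μ hμ))
  obtain ⟨ε, hε, hB⟩ := Matrix.exists_pos_forall_abs_sub_lt_of_eventually
    (hμ.eventually_exists_perm_comp_mem hinj hU)
  refine ⟨ε, hε, fun B _ hBA => memN_of_forall_isEigList fun e he => ?_⟩
  obtain ⟨σ, hσinj, hσnr⟩ := hB B hBA e he
  exact ⟨(Equiv.injective_comp σ e).1 hσinj, hσnr.of_comp_equiv σ⟩

/-- `𝒩_n ∩ 𝒮_n` is open in `𝒮_n`: every `A ∈ 𝒩_n ∩ 𝒮_n` has an (entrywise-sup-norm)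
`ε`-neighborhood whose intersection with `𝒮_n` is contained in `𝒩_n`. -/
theorem nonresonant_open_in_S (n : ℕ) (hn : 1 ≤ n)
    (A : Matrix (Fin n) (Fin n) ℝ) (hA : MemN A) (hAS : MemS A) :
    ∃ ε > (0 : ℝ), ∀ B : Matrix (Fin n) (Fin n) ℝ,
      MemS B → (∀ i j, |B i j - A i j| < ε) → MemN B :=
  nonresonant_open_in_S_general n A hA hAS
end
end

section
/- Let Φ : ℝ × ℝ^n → ℝ^n be a C^1 flow, and let Γ ⊂ ℝ^n be the image of a τ-periodic orbit of Φ (τ > 0, Φ^τ(x) = x for all x ∈ Γ, and Γ is an orbit of Φ). Let ψ : ℝ^n → ℂ be a C^1 Koopman eigenfunction of Φ with eigenvalue μ ∈ ℂ such that ψ ≡ 0 on Γ and Dψ(x) ≠ 0 for all x ∈ Γ (a principal eigenfunction for Γ). Then for every x₀ ∈ Γ, the differential Dψ(x₀) satisfies Dψ(x₀) ∘ D_{x₀}Φ^τ = e^{μ τ} · Dψ(x₀); i.e., Dψ(x₀) is a nonzero eigenvector of the (complexified) adjoint of D_{x₀}Φ^τ with eigenvalue e^{μ τ}. In particular, e^{μ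 τ} is an eigenvalue of D_{x₀}Φ^τ (a Floquet multiplier of Γ). -/
/-!
Every point of `Γ` is fixed by `Φ^τ`, so differentiating the Koopman relation
`ψ ∘ Φ^τ = e^{μτ} ψ` there gives `Dψ(x₀) ∘ DΦ^τ(x₀) = e^{μτ} Dψ(x₀)`. In coordinates, the row
vector of `Dψ(x₀)` is a nonzero left eigenvector of the matrix of `DΦ^τ(x₀)`, and a left
eigenvalue of a square matrix is also a right one, both being the roots of `det (M - c)`.
-/

noncomputable section
open Filter Topology

/-- `Φ` is a C¹ flow on `ℝ^n`. -/
def IsC1Flow {n : ℕ} (Φ : ℝ → (Fin n → ℝ) → (Fin n → ℝ)) : Prop :=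
  ContDiff ℝ 1 (fun p : ℝ × (Fin n → ℝ) => Φ p.1 p.2) ∧
    (∀ x, Φ 0 x = x) ∧ ∀ s t x, Φ (s + t) x = Φ s (Φ t x)

/-- `ψ` is a Koopman eigenfunction of the flow `Φ` with eigenvalue `μ`. -/
def IsKoopmanEigenfunction {n : ℕ} (Φ : ℝ → (Fin n → ℝ) → (Fin n → ℝ)) (μ : ℂ)
    (ψ : (Fin n → ℝ) → ℂ) : Prop :=
  (∃ x, ψ x ≠ 0) ∧ ∀ t x, ψ (Φ t x) = Complex.exp (μ * t) * ψ x

open Matrix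

theorem isFixedPt_apply_of_isFixedPt {α : Type*} {Φ : ℝ → α → α}
    (hadd : ∀ s t x, Φ (s + t) x = Φ s (Φ t x)) {τ : ℝ} {x : α}
    (hx : Function.IsFixedPt (Φ τ) x) (t : ℝ) : Function.IsFixedPt (Φ τ) (Φ t x) := by
  rw [Function.IsFixedPt, ← hadd, add_comm, hadd, hx]

theorem IsC1Flow.differentiable {n : ℕ} {Φ : ℝ → (Fin n → ℝ) → (Fin n → ℝ)}
    (hΦ : IsC1Flow Φ) (t : ℝ) : Differentiable ℝ (Φ t) := fun x =>
  (hΦ.1.differentiable one_ne_zero (t, x)).comp x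
    ((differentiableAt_const t).prodMk differentiableAt_id)

theorem fderiv_comp_fderiv_eq_smul_of_isFixedPt {𝕜 𝕜' E F : Type*}
    [NontriviallyNormedField 𝕜] [NormedField 𝕜'] [NormedAlgebra 𝕜 𝕜']
    [NormedAddCommGroup E] [NormedSpace 𝕜 E] [NormedAddCommGroup F] [NormedSpace 𝕜 F]
    [NormedSpace 𝕜' F] [IsScalarTower 𝕜 𝕜' F]
    {f : E → E} {ψ : E → F} {c : 𝕜'} {x : E} (hx : Function.IsFixedPt f x)
    (hf : DifferentiableAt 𝕜 f x) (hψ : DifferentiableAt 𝕜 ψ x) (h : ∀ y, ψ (f y) = c • ψ y) :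
    (fderiv 𝕜 ψ x).comp (fderiv 𝕜 f x) = c • fderiv 𝕜 ψ x := by
  have hcomp : HasFDerivAt (ψ ∘ f) ((fderiv 𝕜 ψ x).comp (fderiv 𝕜 f x)) x :=
    (hx.symm ▸ hψ.hasFDerivAt : HasFDerivAt ψ (fderiv 𝕜 ψ x) (f x)).comp x hf.hasFDerivAt
  rw [show ψ ∘ f = fun y => c • ψ y from funext h] at hcomp
  exact hcomp.unique (hψ.hasFDerivAt.const_smul c)

theorem Matrix.exists_mulVec_eq_smul_of_vecMul_eq_smul {K ι : Type*} [Field K] [Fintype ι]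
    [DecidableEq ι] {M : Matrix ι ι K} {c : K} {w : ι → K} (hw : w ≠ 0)
    (h : w ᵥ* M = c • w) : ∃ v ≠ 0, M *ᵥ v = c • v := by
  have hdet : (M - c • 1).det = 0 :=
    exists_vecMul_eq_zero_iff.1 ⟨w, hw, by rw [vecMul_sub, vecMul_smul, vecMul_one, h, sub_self]⟩
  obtain ⟨v, hv, hMv⟩ := exists_mulVec_eq_zero_iff.2 hdet
  exact ⟨v, hv, by rwa [sub_mulVec, smul_mulVec, one_mulVec, sub_eq_zero] at hMv⟩

theorem vecMul_toMatrix'_map_ofReal {ι : Type*} [Fintype ι] [DecidableEq ι]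
    (L : (ι → ℝ) →ₗ[ℝ] ι → ℝ) (D : (ι → ℝ) →L[ℝ] ℂ) :
    (fun j => D (Pi.single j 1)) ᵥ* (LinearMap.toMatrix' L).map Complex.ofReal =
      fun i => D (L (Pi.single i 1)) := by
  funext i
  conv_rhs => rw [pi_eq_sum_univ' (L (Pi.single i 1)), map_sum]
  refine Finset.sum_congr rfl fun j _ => ?_
  simp only [map_smul, Complex.real_smul, Matrix.map_apply, LinearMap.toMatrix'_apply, mul_comm]

theorem ContinuousLinearMap.exists_mulVec_eq_smul_of_comp_eq_smul {ι : Type*} [Fintype ι]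
    [DecidableEq ι] {L : (ι → ℝ) →L[ℝ] ι → ℝ} {D : (ι → ℝ) →L[ℝ] ℂ} {c : ℂ} (hD : D ≠ 0)
    (h : D.comp L = c • D) :
    ∃ v : ι → ℂ, v ≠ 0 ∧
      ((LinearMap.toMatrix' L.toLinearMap).map Complex.ofReal).mulVec v = c • v := by
  refine Matrix.exists_mulVec_eq_smul_of_vecMul_eq_smul (w := fun j => D (Pi.single j 1)) ?_ ?_
  · contrapose! hD
    exact ContinuousLinearMap.coe_injective <|
      (Pi.basisFun ℝ ι).ext fun j => by simpa using congrFun hD j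
  · rw [vecMul_toMatrix'_map_ofReal]
    funext i
    exact congr($h (Pi.single i 1))

theorem principal_eigenfunction_differential_is_adjoint_eigenvector_periodic_orbit_general
    (n : ℕ) (Φ : ℝ → (Fin n → ℝ) → (Fin n → ℝ)) (hΦ : IsC1Flow Φ)
    (τ : ℝ) (x₁ : Fin n → ℝ) (hper : Φ τ x₁ = x₁)
    (Γ : Set (Fin n → ℝ)) (hΓ : Γ = Set.range fun t => Φ t x₁)
    (ψ : (Fin n → ℝ) → ℂ) (hψC : ContDiff ℝ 1 ψ)
    (μ : ℂ) (hψ : IsKoopmanEigenfunction Φ μ ψ)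
    (hdψ : ∀ x ∈ Γ, fderiv ℝ ψ x ≠ 0) :
    ∀ x₀ ∈ Γ,
      (fderiv ℝ ψ x₀).comp (fderiv ℝ (Φ τ) x₀) = Complex.exp (μ * τ) • fderiv ℝ ψ x₀ ∧
      ∃ v : Fin n → ℂ, v ≠ 0 ∧
        ((LinearMap.toMatrix' (fderiv ℝ (Φ τ) x₀).toLinearMap).map Complex.ofReal).mulVec v
          = Complex.exp (μ * τ) • v := by
  intro x₀ hx₀
  obtain ⟨t, rfl⟩ := hΓ ▸ hx₀
  have hD := fderiv_comp_fderiv_eq_smul_of_isFixedPt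
    (isFixedPt_apply_of_isFixedPt hΦ.2.2 hper t) (hΦ.differentiable τ _)
    (hψC.differentiable one_ne_zero _) (c := Complex.exp (μ * τ)) (hψ.2 τ)
  exact ⟨hD, ContinuousLinearMap.exists_mulVec_eq_smul_of_comp_eq_smul (hdψ _ hx₀) hD⟩

/-- If `Γ` is the image of a `τ`-periodic orbit of a C¹ flow `Φ` and `ψ` is a C¹ Koopman
eigenfunction with eigenvalue `μ` that vanishes identically on `Γ` with nonvanishing
differential on `Γ`, then for every `x₀ ∈ Γ` the nonzero functional `Dψ(x₀)` satisfies
`Dψ(x₀) ∘ D_{x₀}Φ^τ = e^{μτ} Dψ(x₀)`; in particular `e^{μτ}` is a complex eigenvalue of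
`D_{x₀}Φ^τ` (a Floquet multiplier of `Γ`). -/
theorem principal_eigenfunction_differential_is_adjoint_eigenvector_periodic_orbit
    (n : ℕ) (Φ : ℝ → (Fin n → ℝ) → (Fin n → ℝ)) (hΦ : IsC1Flow Φ)
    (τ : ℝ) (hτ : 0 < τ) (x₁ : Fin n → ℝ) (hper : Φ τ x₁ = x₁)
    (Γ : Set (Fin n → ℝ)) (hΓ : Γ = Set.range fun t => Φ t x₁)
    (ψ : (Fin n → ℝ) → ℂ) (hψC : ContDiff ℝ 1 ψ)
    (μ : ℂ) (hψ : IsKoopmanEigenfunction Φ μ ψ)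
    (hψΓ : ∀ x ∈ Γ, ψ x = 0) (hdψ : ∀ x ∈ Γ, fderiv ℝ ψ x ≠ 0) :
    ∀ x₀ ∈ Γ,
      (fderiv ℝ ψ x₀).comp (fderiv ℝ (Φ τ) x₀) = Complex.exp (μ * τ) • fderiv ℝ ψ x₀ ∧
      ∃ v : Fin n → ℂ, v ≠ 0 ∧
        ((LinearMap.toMatrix' (fderiv ℝ (Φ τ) x₀).toLinearMap).map Complex.ofReal).mulVec v
          = Complex.exp (μ * τ) • v :=
  principal_eigenfunction_differential_is_adjoint_eigenvector_periodic_orbit_general n Φ hΦ τ x₁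
    hper Γ hΓ ψ hψC μ hψ hdψ
end
end
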